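/- Suppose u, ρ, p solve incompressible Euler (∇·u = 0, ∂ₜρ + u·∇ρ = 0, ∂ₜu + u·∇u = −(1/ρ)∇p, ρ > 0), and σ, ϑ are potentials with (∂ₜ + u·∇)σ = (1/2)|u|² − p/ρ and (∂ₜ + u·∇)ϑ = p. Then the nonlocal vorticity ∇×w with w = u − ∇σ − ϑ∇(1/ρ) satisfies ∂ₜ(∇×w) + (u·∇)(∇×w) − ((∇×w)·∇)u = 0. -/

import Mathlib

open scoped BigOperators

noncomputable section

/-- Three-dimensional space as `Fin 3 → ℝ`. -/
abbrev V3 : Type := Fin 3 → ℝ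

/-- Spatial partial derivative `∂ᵢ` of a time-dependent scalar field. -/
def pd (i : Fin 3) (f : ℝ → V3 → ℝ) (t : ℝ) (x : V3) : ℝ :=
  fderiv ℝ (f t) x (Pi.single i 1)

/-- Time derivative `∂ₜ` of a time-dependent scalar field. -/
def pt (f : ℝ → V3 → ℝ) (t : ℝ) (x : V3) : ℝ :=
  deriv (fun s => f s x) t

/-- The `i`-th component of a time-dependent vector field. -/
def comp (K : ℝ → V3 → V3) (i : Fin 3) : ℝ → V3 → ℝ := fun t x => K t x i

/-- Spatial divergence `∇·K`. -/
def div3 (K : ℝ → V3 → V3) (t : ℝ) (x : V3) : ℝ :=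
  ∑ i, pd i (comp K i) t x

/-- Spatial gradient `∇f`. -/
def grad3 (f : ℝ → V3 → ℝ) (t : ℝ) (x : V3) : V3 :=
  fun i => pd i f t x

/-- Spatial curl `∇×K`. -/
def curl3 (K : ℝ → V3 → V3) (t : ℝ) (x : V3) : V3 :=
  ![pd 1 (comp K 2) t x - pd 2 (comp K 1) t x,
    pd 2 (comp K 0) t x - pd 0 (comp K 2) t x,
    pd 0 (comp K 1) t x - pd 1 (comp K 0) t x]

/-- Dot product on `ℝ³`. -/
def dot3 (a b : V3) : ℝ := ∑ i, a i * b i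

/-- Cross product on `ℝ³`. -/
def cross3 (a b : V3) : V3 :=
  ![a 1 * b 2 - a 2 * b 1, a 2 * b 0 - a 0 * b 2, a 0 * b 1 - a 1 * b 0]

/-- Material derivative `∂ₜ + u·∇` on scalar fields. -/
def matD (u : ℝ → V3 → V3) (f : ℝ → V3 → ℝ) (t : ℝ) (x : V3) : ℝ :=
  pt f t x + ∑ i, u t x i * pd i f t x

/-- Advective Lie derivative `𝔇ₜK = ∂ₜK + (u·∇)K − (K·∇)u` on vector fields. -/
def DtVec (u K : ℝ → V3 → V3) (t : ℝ) (x : V3) : V3 :=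
  fun i => pt (comp K i) t x + ∑ j, u t x j * pd j (comp K i) t x
    - ∑ j, K t x j * pd j (comp u i) t x

/-- Symmetric derivative of `u`: `sᵢⱼ = ∂ᵢuⱼ + ∂ⱼuᵢ`. -/
def symmDer (u : ℝ → V3 → V3) (t : ℝ) (x : V3) (i j : Fin 3) : ℝ :=
  pd i (comp u j) t x + pd j (comp u i) t x

/-- Smoothness of a time-dependent scalar field. -/
def SmoothS (f : ℝ → V3 → ℝ) : Prop := ContDiff ℝ (⊤ : ℕ∞) (fun p : ℝ × V3 => f p.1 p.2)

/-- Smoothness of a time-dependent vector field. -/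
def SmoothVec (K : ℝ → V3 → V3) : Prop := ContDiff ℝ (⊤ : ℕ∞) (fun p : ℝ × V3 => K p.1 p.2)

section Tools
variable {f g : ℝ → V3 → ℝ} {i j : Fin 3} {t : ℝ} {x : V3}

lemma SmoothS.cx (hf : SmoothS f) (t : ℝ) : ContDiff ℝ (⊤ : ℕ∞) (f t) :=
  hf.comp ((contDiff_const (c := t)).prodMk contDiff_id)

lemma SmoothS.ct (hf : SmoothS f) (x : V3) : ContDiff ℝ (⊤ : ℕ∞) (fun s => f s x) :=
  hf.comp (contDiff_id.prodMk (contDiff_const (c := x)))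

lemma SmoothS.dx (hf : SmoothS f) (t : ℝ) (x : V3) : DifferentiableAt ℝ (f t) x :=
  ((hf.cx t).differentiable (by simp)).differentiableAt

lemma SmoothS.dt (hf : SmoothS f) (t : ℝ) (x : V3) :
    DifferentiableAt ℝ (fun s => f s x) t :=
  ((hf.ct x).differentiable (by simp)).differentiableAt

lemma pd_eq (hf : SmoothS f) (i : Fin 3) (t : ℝ) (x : V3) :
    pd i f t x = fderiv ℝ (fun p : ℝ × V3 => f p.1 p.2) (t, x) (0, Pi.single i 1) := by
  have h1 : HasFDerivAt (fun p : ℝ × V3 => f p.1 p.2)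
      (fderiv ℝ (fun p : ℝ × V3 => f p.1 p.2) (t, x)) (t, x) :=
    ((hf.differentiable (by simp)) (t, x)).hasFDerivAt
  have h2 : HasFDerivAt (f t)
      ((fderiv ℝ (fun p : ℝ × V3 => f p.1 p.2) (t, x)).comp (ContinuousLinearMap.inr ℝ ℝ V3)) x :=
    h1.comp x (hasFDerivAt_prodMk_right t x)
  rw [pd, h2.fderiv]
  simp

lemma pt_eq (hf : SmoothS f) (t : ℝ) (x : V3) :
    pt f t x = fderiv ℝ (fun p : ℝ × V3 => f p.1 p.2) (t, x) (1, 0) := by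
  have h1 : HasFDerivAt (fun p : ℝ × V3 => f p.1 p.2)
      (fderiv ℝ (fun p : ℝ × V3 => f p.1 p.2) (t, x)) (t, x) :=
    ((hf.differentiable (by simp)) (t, x)).hasFDerivAt
  have h2 : HasFDerivAt (fun s => f s x)
      ((fderiv ℝ (fun p : ℝ × V3 => f p.1 p.2) (t, x)).comp (ContinuousLinearMap.inl ℝ ℝ V3)) t :=
    by have h3 := h1.comp t (hasFDerivAt_prodMk_left (𝕜 := ℝ) t x); exact h3
  rw [pt, h2.hasDerivAt.deriv]
  simp

lemma SmoothS.pdS (hf : SmoothS f) (i : Fin 3) : SmoothS (pd i f) := by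
  have h : (fun p : ℝ × V3 => pd i f p.1 p.2)
      = fun p : ℝ × V3 => fderiv ℝ (fun p : ℝ × V3 => f p.1 p.2) p (0, Pi.single i 1) :=
    funext fun p => pd_eq hf i p.1 p.2
  rw [SmoothS, h]
  exact (hf.fderiv_right (by simp)).clm_apply contDiff_const

lemma SmoothS.ptS (hf : SmoothS f) : SmoothS (pt f) := by
  have h : (fun p : ℝ × V3 => pt f p.1 p.2)
      = fun p : ℝ × V3 => fderiv ℝ (fun p : ℝ × V3 => f p.1 p.2) p (1, 0) :=
    funext fun p => pt_eq hf p.1 p.2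
  rw [SmoothS, h]
  exact (hf.fderiv_right (by simp)).clm_apply contDiff_const

lemma snd_deriv (hf : SmoothS f) (t : ℝ) (x : V3) (v w : ℝ × V3) :
    fderiv ℝ (fun q : ℝ × V3 => fderiv ℝ (fun p : ℝ × V3 => f p.1 p.2) q w) (t, x) v
    = fderiv ℝ (fderiv ℝ (fun p : ℝ × V3 => f p.1 p.2)) (t, x) v w := by
  rw [fderiv_clm_apply
    (((hf.fderiv_right (m := (⊤ : ℕ∞)) (by simp)).differentiable (by simp)).differentiableAt)
    (differentiableAt_const w)]
  simp

lemma snd_symm (hf : SmoothS f) (t : ℝ) (x : V3) (v w : ℝ × V3) :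
    fderiv ℝ (fderiv ℝ (fun p : ℝ × V3 => f p.1 p.2)) (t, x) v w
    = fderiv ℝ (fderiv ℝ (fun p : ℝ × V3 => f p.1 p.2)) (t, x) w v :=
  second_derivative_symmetric
    (fun y => ((hf.differentiable (by simp)) y).hasFDerivAt)
    ((((hf.fderiv_right (m := (⊤ : ℕ∞)) (by simp)).differentiable (by simp)) (t, x)).hasFDerivAt) v w

lemma pd_comm (hf : SmoothS f) (i j : Fin 3) (t : ℝ) (x : V3) :
    pd i (pd j f) t x = pd j (pd i f) t x := by
  have e : ∀ (k l : Fin 3), pd k (pd l f) t x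
      = fderiv ℝ (fderiv ℝ (fun p : ℝ × V3 => f p.1 p.2)) (t, x)
        (0, Pi.single k 1) (0, Pi.single l 1) := by
    intro k l
    rw [pd_eq (hf.pdS l) k t x]
    have h : (fun p : ℝ × V3 => pd l f p.1 p.2)
        = fun q : ℝ × V3 => fderiv ℝ (fun p : ℝ × V3 => f p.1 p.2) q (0, Pi.single l 1) :=
      funext fun p => pd_eq hf l p.1 p.2
    rw [h, snd_deriv hf]
  rw [e i j, e j i, snd_symm hf]

lemma pt_pd_comm (hf : SmoothS f) (i : Fin 3) (t : ℝ) (x : V3) :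
    pt (pd i f) t x = pd i (pt f) t x := by
  have e1 : pt (pd i f) t x
      = fderiv ℝ (fderiv ℝ (fun p : ℝ × V3 => f p.1 p.2)) (t, x) (1, 0) (0, Pi.single i 1) := by
    rw [pt_eq (hf.pdS i) t x]
    have h : (fun p : ℝ × V3 => pd i f p.1 p.2)
        = fun q : ℝ × V3 => fderiv ℝ (fun p : ℝ × V3 => f p.1 p.2) q (0, Pi.single i 1) :=
      funext fun p => pd_eq hf i p.1 p.2
    rw [h, snd_deriv hf]
  have e2 : pd i (pt f) t x
      = fderiv ℝ (fderiv ℝ (fun p : ℝ × V3 => f p.1 p.2)) (t, x) (0, Pi.single i 1) (1, 0) := by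
    rw [pd_eq (hf.ptS) i t x]
    have h : (fun p : ℝ × V3 => pt f p.1 p.2)
        = fun q : ℝ × V3 => fderiv ℝ (fun p : ℝ × V3 => f p.1 p.2) q (1, 0) :=
      funext fun p => pt_eq hf p.1 p.2
    rw [h, snd_deriv hf]
  rw [e1, e2, snd_symm hf]

end Tools

section Arith
variable {f g : ℝ → V3 → ℝ} {i : Fin 3} {t : ℝ} {x : V3}

lemma SmoothS.addS (hf : SmoothS f) (hg : SmoothS g) :
    SmoothS (fun t x => f t x + g t x) := hf.add hg

lemma SmoothS.subS (hf : SmoothS f) (hg : SmoothS g) :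
    SmoothS (fun t x => f t x - g t x) := hf.sub hg

lemma SmoothS.mulS (hf : SmoothS f) (hg : SmoothS g) :
    SmoothS (fun t x => f t x * g t x) := hf.mul hg

lemma SmoothS.negS (hf : SmoothS f) : SmoothS (fun t x => -f t x) := hf.neg

lemma pd_add (hf : SmoothS f) (hg : SmoothS g) (i : Fin 3) (t : ℝ) (x : V3) :
    pd i (fun t x => f t x + g t x) t x = pd i f t x + pd i g t x := by
  have h : fderiv ℝ (fun y => f t y + g t y) x = fderiv ℝ (f t) x + fderiv ℝ (g t) x :=
    fderiv_add (hf.dx t x) (hg.dx t x)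
  simp only [pd]
  rw [h]
  simp

lemma pd_sub (hf : SmoothS f) (hg : SmoothS g) (i : Fin 3) (t : ℝ) (x : V3) :
    pd i (fun t x => f t x - g t x) t x = pd i f t x - pd i g t x := by
  have h : fderiv ℝ (fun y => f t y - g t y) x = fderiv ℝ (f t) x - fderiv ℝ (g t) x :=
    fderiv_sub (hf.dx t x) (hg.dx t x)
  simp only [pd]
  rw [h]
  simp

lemma pd_mul (hf : SmoothS f) (hg : SmoothS g) (i : Fin 3) (t : ℝ) (x : V3) :
    pd i (fun t x => f t x * g t x) t x = pd i f t x * g t x + f t x * pd i g t x := by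
  have h : fderiv ℝ (fun y => f t y * g t y) x
      = f t x • fderiv ℝ (g t) x + g t x • fderiv ℝ (f t) x :=
    fderiv_mul (hf.dx t x) (hg.dx t x)
  simp only [pd]
  rw [h]
  simp; ring

lemma pd_neg (hf : SmoothS f) (i : Fin 3) (t : ℝ) (x : V3) :
    pd i (fun t x => -f t x) t x = -pd i f t x := by
  have h : fderiv ℝ (fun y => -f t y) x = -fderiv ℝ (f t) x := fderiv_neg
  simp only [pd]
  rw [h]
  simp

lemma pd_zero (i : Fin 3) (t : ℝ) (x : V3) :
    pd i (fun _ _ => (0:ℝ)) t x = 0 := by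
  simp [pd]

lemma pt_add (hf : SmoothS f) (hg : SmoothS g) (t : ℝ) (x : V3) :
    pt (fun t x => f t x + g t x) t x = pt f t x + pt g t x :=
  deriv_add (hf.dt t x) (hg.dt t x)

lemma pt_sub (hf : SmoothS f) (hg : SmoothS g) (t : ℝ) (x : V3) :
    pt (fun t x => f t x - g t x) t x = pt f t x - pt g t x :=
  deriv_sub (hf.dt t x) (hg.dt t x)

lemma pt_mul (hf : SmoothS f) (hg : SmoothS g) (t : ℝ) (x : V3) :
    pt (fun t x => f t x * g t x) t x = pt f t x * g t x + f t x * pt g t x :=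
  deriv_mul (hf.dt t x) (hg.dt t x)

end Arith

section QSec
variable {ρ : ℝ → V3 → ℝ}

lemma SmoothS.invS (hρ : SmoothS ρ) (hne : ∀ t x, ρ t x ≠ 0) :
    SmoothS (fun t x => 1 / ρ t x) := by
  have h : (fun (t : ℝ) (x : V3) => 1 / ρ t x) = (fun t x => (ρ t x)⁻¹) := by
    funext t x; exact one_div _
  rw [h]
  exact hρ.inv fun pp => hne pp.1 pp.2

lemma pd_one_div (hρ : SmoothS ρ) (hne : ∀ t x, ρ t x ≠ 0) (i : Fin 3) (t : ℝ) (x : V3) :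
    pd i (fun t x => 1 / ρ t x) t x = -pd i ρ t x / ρ t x ^ 2 := by
  have h1 : HasFDerivAt (fun y => (ρ t y)⁻¹)
      ((-ContinuousLinearMap.mulLeftRight ℝ ℝ (ρ t x)⁻¹ (ρ t x)⁻¹).comp (fderiv ℝ (ρ t) x)) x :=
    (hasFDerivAt_inv' (hne t x)).comp x (hρ.dx t x).hasFDerivAt
  have h2 : pd i (fun t x => 1 / ρ t x) t x = fderiv ℝ (fun y => (ρ t y)⁻¹) x (Pi.single i 1) := by
    simp only [pd, one_div]
  rw [h2, h1.fderiv]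
  simp only [ContinuousLinearMap.coe_comp', Function.comp_apply,
    ContinuousLinearMap.neg_apply, ContinuousLinearMap.mulLeftRight_apply, pd]
  field_simp

lemma pt_one_div (hρ : SmoothS ρ) (hne : ∀ t x, ρ t x ≠ 0) (t : ℝ) (x : V3) :
    pt (fun t x => 1 / ρ t x) t x = -pt ρ t x / ρ t x ^ 2 := by
  simp only [pt, one_div]
  exact deriv_inv'' (hρ.dt t x) (hne t x)

end QSec

lemma matD_pd {u : ℝ → V3 → V3} {f g : ℝ → V3 → ℝ}
    (hu : SmoothVec u) (hf : SmoothS f) (hg : SmoothS g)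
    (h : ∀ t x, matD u f t x = g t x) (k : Fin 3) (t : ℝ) (x : V3) :
    pt (pd k f) t x
      + (u t x 0 * pd 0 (pd k f) t x + u t x 1 * pd 1 (pd k f) t x + u t x 2 * pd 2 (pd k f) t x)
      + (pd k (comp u 0) t x * pd 0 f t x + pd k (comp u 1) t x * pd 1 f t x
          + pd k (comp u 2) t x * pd 2 f t x)
      = pd k g t x := by
  have hcu : ∀ j : Fin 3, SmoothS (comp u j) := fun j => contDiff_pi.1 hu j
  have hpf : ∀ j : Fin 3, SmoothS (pd j f) := fun j => hf.pdS j
  have hB0 : SmoothS (fun t x => u t x 0 * pd 0 f t x) := (hcu 0).mulS (hpf 0)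
  have hB1 : SmoothS (fun t x => u t x 1 * pd 1 f t x) := (hcu 1).mulS (hpf 1)
  have hB2 : SmoothS (fun t x => u t x 2 * pd 2 f t x) := (hcu 2).mulS (hpf 2)
  have hB01 : SmoothS (fun t x => u t x 0 * pd 0 f t x + u t x 1 * pd 1 f t x) := hB0.addS hB1
  have hB : SmoothS (fun t x => u t x 0 * pd 0 f t x + u t x 1 * pd 1 f t x
      + u t x 2 * pd 2 f t x) := hB01.addS hB2
  have hFg : (fun t x => pt f t x + (u t x 0 * pd 0 f t x + u t x 1 * pd 1 f t x
      + u t x 2 * pd 2 f t x)) = g := by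
    funext t x
    rw [← h t x]
    simp [matD, Fin.sum_univ_three]
  have e : pd k (fun t x => pt f t x + (u t x 0 * pd 0 f t x + u t x 1 * pd 1 f t x
      + u t x 2 * pd 2 f t x)) t x = pd k g t x := by rw [hFg]
  have s1 : pd k (fun t x => pt f t x + (u t x 0 * pd 0 f t x + u t x 1 * pd 1 f t x
        + u t x 2 * pd 2 f t x)) t x
      = pd k (pt f) t x + pd k (fun t x => u t x 0 * pd 0 f t x + u t x 1 * pd 1 f t x
        + u t x 2 * pd 2 f t x) t x :=
    pd_add hf.ptS hB k t x
  have s2 : pd k (fun t x => u t x 0 * pd 0 f t x + u t x 1 * pd 1 f t x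
        + u t x 2 * pd 2 f t x) t x
      = pd k (fun t x => u t x 0 * pd 0 f t x + u t x 1 * pd 1 f t x) t x
        + pd k (fun t x => u t x 2 * pd 2 f t x) t x :=
    pd_add hB01 hB2 k t x
  have s3 : pd k (fun t x => u t x 0 * pd 0 f t x + u t x 1 * pd 1 f t x) t x
      = pd k (fun t x => u t x 0 * pd 0 f t x) t x + pd k (fun t x => u t x 1 * pd 1 f t x) t x :=
    pd_add hB0 hB1 k t x
  have m0 : pd k (fun t x => u t x 0 * pd 0 f t x) t x
      = pd k (comp u 0) t x * pd 0 f t x + u t x 0 * pd k (pd 0 f) t x :=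
    pd_mul (hcu 0) (hpf 0) k t x
  have m1 : pd k (fun t x => u t x 1 * pd 1 f t x) t x
      = pd k (comp u 1) t x * pd 1 f t x + u t x 1 * pd k (pd 1 f) t x :=
    pd_mul (hcu 1) (hpf 1) k t x
  have m2 : pd k (fun t x => u t x 2 * pd 2 f t x) t x
      = pd k (comp u 2) t x * pd 2 f t x + u t x 2 * pd k (pd 2 f) t x :=
    pd_mul (hcu 2) (hpf 2) k t x
  have c0 : pd k (pd 0 f) t x = pd 0 (pd k f) t x := pd_comm hf k 0 t x
  have c1 : pd k (pd 1 f) t x = pd 1 (pd k f) t x := pd_comm hf k 1 t x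
  have c2 : pd k (pd 2 f) t x = pd 2 (pd k f) t x := pd_comm hf k 2 t x
  have cpt : pd k (pt f) t x = pt (pd k f) t x := (pt_pd_comm hf k t x).symm
  linear_combination e - s1 - s2 - s3 - m0 - m1 - m2 - cpt
    - u t x 0 * c0 - u t x 1 * c1 - u t x 2 * c2

lemma pd_w {u : ℝ → V3 → V3} {σ ϑ q : ℝ → V3 → ℝ}
    (hu : SmoothVec u) (hσ : SmoothS σ) (hϑ : SmoothS ϑ) (hq : SmoothS q)
    (j k : Fin 3) (t : ℝ) (x : V3) :
    pd j (fun t x => u t x k - pd k σ t x - ϑ t x * pd k q t x) t x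
      = pd j (comp u k) t x - pd j (pd k σ) t x
        - (pd j ϑ t x * pd k q t x + ϑ t x * pd j (pd k q) t x) := by
  have hck : SmoothS (comp u k) := contDiff_pi.1 hu k
  have h1 : pd j (fun t x => u t x k - pd k σ t x - ϑ t x * pd k q t x) t x
      = pd j (fun t x => u t x k - pd k σ t x) t x
        - pd j (fun t x => ϑ t x * pd k q t x) t x :=
    pd_sub (hck.subS (hσ.pdS k)) (hϑ.mulS (hq.pdS k)) j t x
  have h2 : pd j (fun t x => u t x k - pd k σ t x) t x
      = pd j (comp u k) t x - pd j (pd k σ) t x :=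
    pd_sub hck (hσ.pdS k) j t x
  have h3 : pd j (fun t x => ϑ t x * pd k q t x) t x
      = pd j ϑ t x * pd k q t x + ϑ t x * pd j (pd k q) t x :=
    pd_mul hϑ (hq.pdS k) j t x
  rw [h1, h2, h3]

lemma expand4pt {A B C D E F : ℝ → V3 → ℝ} (hA : SmoothS A) (hB : SmoothS B)
    (hC : SmoothS C) (hD : SmoothS D) (hE : SmoothS E) (hF : SmoothS F) (t : ℝ) (x : V3) :
    pt (fun t x => (A t x - B t x) - (C t x * D t x - E t x * F t x)) t x
      = (pt A t x - pt B t x)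
        - ((pt C t x * D t x + C t x * pt D t x) - (pt E t x * F t x + E t x * pt F t x)) := by
  have h1 : pt (fun t x => (A t x - B t x) - (C t x * D t x - E t x * F t x)) t x
      = pt (fun t x => A t x - B t x) t x
        - pt (fun t x => C t x * D t x - E t x * F t x) t x :=
    pt_sub (hA.subS hB) ((hC.mulS hD).subS (hE.mulS hF)) t x
  have h2 : pt (fun t x => A t x - B t x) t x = pt A t x - pt B t x := pt_sub hA hB t x
  have h3 : pt (fun t x => C t x * D t x - E t x * F t x) t x
      = pt (fun t x => C t x * D t x) t x - pt (fun t x => E t x * F t x) t x :=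
    pt_sub (hC.mulS hD) (hE.mulS hF) t x
  have h4 : pt (fun t x => C t x * D t x) t x = pt C t x * D t x + C t x * pt D t x :=
    pt_mul hC hD t x
  have h5 : pt (fun t x => E t x * F t x) t x = pt E t x * F t x + E t x * pt F t x :=
    pt_mul hE hF t x
  rw [h1, h2, h3, h4, h5]

lemma expand4pd {A B C D E F : ℝ → V3 → ℝ} (hA : SmoothS A) (hB : SmoothS B)
    (hC : SmoothS C) (hD : SmoothS D) (hE : SmoothS E) (hF : SmoothS F)
    (j : Fin 3) (t : ℝ) (x : V3) :
    pd j (fun t x => (A t x - B t x) - (C t x * D t x - E t x * F t x)) t x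
      = (pd j A t x - pd j B t x)
        - ((pd j C t x * D t x + C t x * pd j D t x)
            - (pd j E t x * F t x + E t x * pd j F t x)) := by
  have h1 : pd j (fun t x => (A t x - B t x) - (C t x * D t x - E t x * F t x)) t x
      = pd j (fun t x => A t x - B t x) t x
        - pd j (fun t x => C t x * D t x - E t x * F t x) t x :=
    pd_sub (hA.subS hB) ((hC.mulS hD).subS (hE.mulS hF)) j t x
  have h2 : pd j (fun t x => A t x - B t x) t x = pd j A t x - pd j B t x := pd_sub hA hB j t x
  have h3 : pd j (fun t x => C t x * D t x - E t x * F t x) t x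
      = pd j (fun t x => C t x * D t x) t x - pd j (fun t x => E t x * F t x) t x :=
    pd_sub (hC.mulS hD) (hE.mulS hF) j t x
  have h4 : pd j (fun t x => C t x * D t x) t x = pd j C t x * D t x + C t x * pd j D t x :=
    pd_mul hC hD j t x
  have h5 : pd j (fun t x => E t x * F t x) t x = pd j E t x * F t x + E t x * pd j F t x :=
    pd_mul hE hF j t x
  rw [h1, h2, h3, h4, h5]

/-- The nonlocal vorticity `∇×w`, with `w = u − ∇σ − ϑ∇(1/ρ)`, is a vector
invariant of incompressible Euler flow with non-constant density. -/
theorem nonlocal_vorticity_invariant_incompressible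
    (u : ℝ → V3 → V3) (ρ p σ ϑ : ℝ → V3 → ℝ)
    (hu : SmoothVec u) (hρ : SmoothS ρ) (hp : SmoothS p)
    (hσ : SmoothS σ) (hϑ : SmoothS ϑ)
    (hρpos : ∀ t x, 0 < ρ t x)
    (hmom : ∀ t x i, pt (comp u i) t x + (∑ j, u t x j * pd j (comp u i) t x)
      = -(1 / ρ t x) * pd i p t x)
    (hdivfree : ∀ t x, div3 u t x = 0)
    (hdens : ∀ t x, matD u ρ t x = 0)
    (hσeq : ∀ t x, matD u σ t x = (1/2) * dot3 (u t x) (u t x) - p t x / ρ t x)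
    (hϑeq : ∀ t x, matD u ϑ t x = p t x) :
    ∀ t x, DtVec u
      (fun t x => curl3
        (fun t x i => u t x i - pd i σ t x
          - ϑ t x * pd i (fun t x => 1 / ρ t x) t x) t x) t x = 0 := by
  have hρne : ∀ t x, ρ t x ≠ 0 := fun t x => ne_of_gt (hρpos t x)
  set q : ℝ → V3 → ℝ := fun t x => 1 / ρ t x with hqdef
  set W : ℝ → V3 → V3 :=
    fun t x => curl3 (fun t x i => u t x i - pd i σ t x - ϑ t x * pd i q t x) t x with hWdef
  have hqS : SmoothS q := by rw [hqdef]; exact hρ.invS hρne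
  have hcu : ∀ j : Fin 3, SmoothS (comp u j) := fun j => contDiff_pi.1 hu j
  have hqv : ∀ t x, q t x = 1 / ρ t x := fun t x => by rw [hqdef]
  -- material derivative of q vanishes
  have hq0 : ∀ t x, matD u q t x = 0 := by
    intro t x
    have hd : pt ρ t x + (u t x 0 * pd 0 ρ t x + u t x 1 * pd 1 ρ t x
        + u t x 2 * pd 2 ρ t x) = 0 := by
      have h := hdens t x
      simp only [matD, Fin.sum_univ_three] at h
      exact h
    rw [hqdef]
    simp only [matD, Fin.sum_univ_three]
    rw [pt_one_div hρ hρne t x, pd_one_div hρ hρne 0 t x,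
        pd_one_div hρ hρne 1 t x, pd_one_div hρ hρne 2 t x]
    linear_combination (-(1:ℝ) / ρ t x ^ 2) * hd
  -- differentiated momentum equation
  have hM : ∀ (i k : Fin 3) (t : ℝ) (x : V3),
      pt (pd k (comp u i)) t x
        + (u t x 0 * pd 0 (pd k (comp u i)) t x + u t x 1 * pd 1 (pd k (comp u i)) t x
            + u t x 2 * pd 2 (pd k (comp u i)) t x)
        + (pd k (comp u 0) t x * pd 0 (comp u i) t x + pd k (comp u 1) t x * pd 1 (comp u i) t x
            + pd k (comp u 2) t x * pd 2 (comp u i) t x)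
      = -(pd k q t x * pd i p t x + q t x * pd k (pd i p) t x) := by
    intro i k t x
    have hgS : SmoothS (fun t x => -(q t x * pd i p t x)) := (hqS.mulS (hp.pdS i)).negS
    have hmom' : ∀ t x, matD u (comp u i) t x = -(q t x * pd i p t x) := by
      intro t x
      rw [hqv t x]
      simp only [matD]
      rw [hmom t x i]
      ring
    have e := matD_pd hu (hcu i) hgS hmom' k t x
    have e2 : pd k (fun t x => -(q t x * pd i p t x)) t x
        = -pd k (fun t x => q t x * pd i p t x) t x :=
      pd_neg (hqS.mulS (hp.pdS i)) k t x
    have e3 : pd k (fun t x => q t x * pd i p t x) t x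
        = pd k q t x * pd i p t x + q t x * pd k (pd i p) t x :=
      pd_mul hqS (hp.pdS i) k t x
    linear_combination e + e2 - e3
  -- differentiated ϑ equation
  have hT : ∀ (k : Fin 3) (t : ℝ) (x : V3),
      pt (pd k ϑ) t x
        + (u t x 0 * pd 0 (pd k ϑ) t x + u t x 1 * pd 1 (pd k ϑ) t x
            + u t x 2 * pd 2 (pd k ϑ) t x)
        + (pd k (comp u 0) t x * pd 0 ϑ t x + pd k (comp u 1) t x * pd 1 ϑ t x
            + pd k (comp u 2) t x * pd 2 ϑ t x)
      = pd k p t x := fun k t x => matD_pd hu hϑ hp hϑeq k t x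
  -- differentiated q equation
  have hzS : SmoothS (fun _ _ => (0:ℝ)) := contDiff_const
  have hq0' : ∀ t x, matD u q t x = (fun _ _ => (0:ℝ)) t x := fun t x => hq0 t x
  have hQ : ∀ (k : Fin 3) (t : ℝ) (x : V3),
      pt (pd k q) t x
        + (u t x 0 * pd 0 (pd k q) t x + u t x 1 * pd 1 (pd k q) t x
            + u t x 2 * pd 2 (pd k q) t x)
        + (pd k (comp u 0) t x * pd 0 q t x + pd k (comp u 1) t x * pd 1 q t x
            + pd k (comp u 2) t x * pd 2 q t x)
      = 0 := fun k t x => (matD_pd hu hqS hzS hq0' k t x).trans (pd_zero k t x)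
  -- the curl of w
  have hW0 : comp W 0 = (fun t x => (pd 1 (comp u 2) t x - pd 2 (comp u 1) t x)
      - (pd 1 ϑ t x * pd 2 q t x - pd 2 ϑ t x * pd 1 q t x)) := by
    funext t x
    rw [hWdef]
    have e0 : comp (fun t x => curl3 (fun t x i => u t x i - pd i σ t x
          - ϑ t x * pd i q t x) t x) 0 t x
        = pd 1 (fun t x => u t x 2 - pd 2 σ t x - ϑ t x * pd 2 q t x) t x
          - pd 2 (fun t x => u t x 1 - pd 1 σ t x - ϑ t x * pd 1 q t x) t x := rfl
    rw [e0, pd_w hu hσ hϑ hqS 1 2 t x, pd_w hu hσ hϑ hqS 2 1 t x,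
        pd_comm hσ 2 1 t x, pd_comm hqS 2 1 t x]
    ring
  have hW1 : comp W 1 = (fun t x => (pd 2 (comp u 0) t x - pd 0 (comp u 2) t x)
      - (pd 2 ϑ t x * pd 0 q t x - pd 0 ϑ t x * pd 2 q t x)) := by
    funext t x
    rw [hWdef]
    have e0 : comp (fun t x => curl3 (fun t x i => u t x i - pd i σ t x
          - ϑ t x * pd i q t x) t x) 1 t x
        = pd 2 (fun t x => u t x 0 - pd 0 σ t x - ϑ t x * pd 0 q t x) t x
          - pd 0 (fun t x => u t x 2 - pd 2 σ t x - ϑ t x * pd 2 q t x) t x := rfl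
    rw [e0, pd_w hu hσ hϑ hqS 2 0 t x, pd_w hu hσ hϑ hqS 0 2 t x,
        pd_comm hσ 0 2 t x, pd_comm hqS 0 2 t x]
    ring
  have hW2 : comp W 2 = (fun t x => (pd 0 (comp u 1) t x - pd 1 (comp u 0) t x)
      - (pd 0 ϑ t x * pd 1 q t x - pd 1 ϑ t x * pd 0 q t x)) := by
    funext t x
    rw [hWdef]
    have e0 : comp (fun t x => curl3 (fun t x i => u t x i - pd i σ t x
          - ϑ t x * pd i q t x) t x) 2 t x
        = pd 0 (fun t x => u t x 1 - pd 1 σ t x - ϑ t x * pd 1 q t x) t x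
          - pd 1 (fun t x => u t x 0 - pd 0 σ t x - ϑ t x * pd 0 q t x) t x := rfl
    rw [e0, pd_w hu hσ hϑ hqS 0 1 t x, pd_w hu hσ hϑ hqS 1 0 t x,
        pd_comm hσ 1 0 t x, pd_comm hqS 1 0 t x]
    ring
  intro t x
  have hdiv : pd 0 (comp u 0) t x + pd 1 (comp u 1) t x + pd 2 (comp u 2) t x = 0 := by
    have h := hdivfree t x
    simp only [div3, Fin.sum_univ_three] at h
    exact h
  -- values of W
  have hv0 : W t x 0 = (pd 1 (comp u 2) t x - pd 2 (comp u 1) t x)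
      - (pd 1 ϑ t x * pd 2 q t x - pd 2 ϑ t x * pd 1 q t x) := congrFun (congrFun hW0 t) x
  have hv1 : W t x 1 = (pd 2 (comp u 0) t x - pd 0 (comp u 2) t x)
      - (pd 2 ϑ t x * pd 0 q t x - pd 0 ϑ t x * pd 2 q t x) := congrFun (congrFun hW1 t) x
  have hv2 : W t x 2 = (pd 0 (comp u 1) t x - pd 1 (comp u 0) t x)
      - (pd 0 ϑ t x * pd 1 q t x - pd 1 ϑ t x * pd 0 q t x) := congrFun (congrFun hW2 t) x
  -- time derivatives of components of W
  have hptW0 : pt (comp W 0) t x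
      = (pt (pd 1 (comp u 2)) t x - pt (pd 2 (comp u 1)) t x)
        - ((pt (pd 1 ϑ) t x * pd 2 q t x + pd 1 ϑ t x * pt (pd 2 q) t x)
            - (pt (pd 2 ϑ) t x * pd 1 q t x + pd 2 ϑ t x * pt (pd 1 q) t x)) := by
    rw [hW0]
    exact expand4pt ((hcu 2).pdS 1) ((hcu 1).pdS 2) (hϑ.pdS 1) (hqS.pdS 2) (hϑ.pdS 2)
      (hqS.pdS 1) t x
  have hptW1 : pt (comp W 1) t x
      = (pt (pd 2 (comp u 0)) t x - pt (pd 0 (comp u 2)) t x)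
        - ((pt (pd 2 ϑ) t x * pd 0 q t x + pd 2 ϑ t x * pt (pd 0 q) t x)
            - (pt (pd 0 ϑ) t x * pd 2 q t x + pd 0 ϑ t x * pt (pd 2 q) t x)) := by
    rw [hW1]
    exact expand4pt ((hcu 0).pdS 2) ((hcu 2).pdS 0) (hϑ.pdS 2) (hqS.pdS 0) (hϑ.pdS 0)
      (hqS.pdS 2) t x
  have hptW2 : pt (comp W 2) t x
      = (pt (pd 0 (comp u 1)) t x - pt (pd 1 (comp u 0)) t x)
        - ((pt (pd 0 ϑ) t x * pd 1 q t x + pd 0 ϑ t x * pt (pd 1 q) t x)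
            - (pt (pd 1 ϑ) t x * pd 0 q t x + pd 1 ϑ t x * pt (pd 0 q) t x)) := by
    rw [hW2]
    exact expand4pt ((hcu 1).pdS 0) ((hcu 0).pdS 1) (hϑ.pdS 0) (hqS.pdS 1) (hϑ.pdS 1)
      (hqS.pdS 0) t x
  -- spatial derivatives of components of W
  have hdW0 : ∀ j : Fin 3, pd j (comp W 0) t x
      = (pd j (pd 1 (comp u 2)) t x - pd j (pd 2 (comp u 1)) t x)
        - ((pd j (pd 1 ϑ) t x * pd 2 q t x + pd 1 ϑ t x * pd j (pd 2 q) t x)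
            - (pd j (pd 2 ϑ) t x * pd 1 q t x + pd 2 ϑ t x * pd j (pd 1 q) t x)) := by
    intro j
    rw [hW0]
    exact expand4pd ((hcu 2).pdS 1) ((hcu 1).pdS 2) (hϑ.pdS 1) (hqS.pdS 2) (hϑ.pdS 2)
      (hqS.pdS 1) j t x
  have hdW1 : ∀ j : Fin 3, pd j (comp W 1) t x
      = (pd j (pd 2 (comp u 0)) t x - pd j (pd 0 (comp u 2)) t x)
        - ((pd j (pd 2 ϑ) t x * pd 0 q t x + pd 2 ϑ t x * pd j (pd 0 q) t x)
            - (pd j (pd 0 ϑ) t x * pd 2 q t x + pd 0 ϑ t x * pd j (pd 2 q) t x)) := by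
    intro j
    rw [hW1]
    exact expand4pd ((hcu 0).pdS 2) ((hcu 2).pdS 0) (hϑ.pdS 2) (hqS.pdS 0) (hϑ.pdS 0)
      (hqS.pdS 2) j t x
  have hdW2 : ∀ j : Fin 3, pd j (comp W 2) t x
      = (pd j (pd 0 (comp u 1)) t x - pd j (pd 1 (comp u 0)) t x)
        - ((pd j (pd 0 ϑ) t x * pd 1 q t x + pd 0 ϑ t x * pd j (pd 1 q) t x)
            - (pd j (pd 1 ϑ) t x * pd 0 q t x + pd 1 ϑ t x * pd j (pd 0 q) t x)) := by
    intro j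
    rw [hW2]
    exact expand4pd ((hcu 1).pdS 0) ((hcu 0).pdS 1) (hϑ.pdS 0) (hqS.pdS 1) (hϑ.pdS 1)
      (hqS.pdS 0) j t x
  have g0 : DtVec u W t x 0 = 0 := by
    simp only [DtVec, Fin.sum_univ_three]
    linear_combination hptW0 + u t x 0 * hdW0 0 + u t x 1 * hdW0 1 + u t x 2 * hdW0 2
      - pd 0 (comp u 0) t x * hv0 - pd 1 (comp u 0) t x * hv1 - pd 2 (comp u 0) t x * hv2
      + hM 2 1 t x - hM 1 2 t x - pd 2 q t x * hT 1 t x - pd 1 ϑ t x * hQ 2 t x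
      + pd 1 q t x * hT 2 t x + pd 2 ϑ t x * hQ 1 t x
      - ((pd 1 (comp u 2) t x - pd 2 (comp u 1) t x)
          - (pd 1 ϑ t x * pd 2 q t x - pd 2 ϑ t x * pd 1 q t x)) * hdiv
      + q t x * pd_comm hp 2 1 t x
  have g1 : DtVec u W t x 1 = 0 := by
    simp only [DtVec, Fin.sum_univ_three]
    linear_combination hptW1 + u t x 0 * hdW1 0 + u t x 1 * hdW1 1 + u t x 2 * hdW1 2
      - pd 0 (comp u 1) t x * hv0 - pd 1 (comp u 1) t x * hv1 - pd 2 (comp u 1) t x * hv2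
      + hM 0 2 t x - hM 2 0 t x - pd 0 q t x * hT 2 t x - pd 2 ϑ t x * hQ 0 t x
      + pd 2 q t x * hT 0 t x + pd 0 ϑ t x * hQ 2 t x
      - ((pd 2 (comp u 0) t x - pd 0 (comp u 2) t x)
          - (pd 2 ϑ t x * pd 0 q t x - pd 0 ϑ t x * pd 2 q t x)) * hdiv
      + q t x * pd_comm hp 0 2 t x
  have g2 : DtVec u W t x 2 = 0 := by
    simp only [DtVec, Fin.sum_univ_three]
    linear_combination hptW2 + u t x 0 * hdW2 0 + u t x 1 * hdW2 1 + u t x 2 * hdW2 2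
      - pd 0 (comp u 2) t x * hv0 - pd 1 (comp u 2) t x * hv1 - pd 2 (comp u 2) t x * hv2
      + hM 1 0 t x - hM 0 1 t x - pd 1 q t x * hT 0 t x - pd 0 ϑ t x * hQ 1 t x
      + pd 0 q t x * hT 1 t x + pd 1 ϑ t x * hQ 0 t x
      - ((pd 0 (comp u 1) t x - pd 1 (comp u 0) t x)
          - (pd 0 ϑ t x * pd 1 q t x - pd 1 ϑ t x * pd 0 q t x)) * hdiv
      + q t x * pd_comm hp 1 0 t x
  funext i
  fin_cases i
  · exact g0
  · exact g1
  · exact g2
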